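/- For every integer n ≥ 1 and every composition (n₁,…,n_k) of n (a finite sequence of positive integers with n₁+⋯+n_k = n), the composition C_n of table sizes in the ordered Chinese Restaurant Process satisfies the product formula P(C_n = (n₁,…,n_k)) = ∏_{j=1}^{k} q_{α,θ}(N_j, n_j), where N_j = n_j + n_{j+1} + ⋯ + n_k. In particular, the sequence (C_n, n ≥ 1) is regenerative: conditionally given that the first part of C_n equals n₁, the remaining parts form a composition of n−n₁ distributed as C_{n−n₁}. -/

import Mathlib

/-!
The law of `C_n` is determined by its forward equation: `(n + θ) P(C_{n+1} = c)` is the inflow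
into `c`, a weighted sum of `P(C_n = d)` over the compositions `d` that can precede `c`. So it
suffices that the product `∏ q(N_j, n_j)` satisfies the same equation. Peeling off the first
part `a` of `c = a :: t`, where `t` is a composition of `s`, the inflow of the product is the
inflow through the first part plus `q(a + s - 1, a)` times the inflow of `t`; by induction on the
length the equation reduces to two recursions of the decrement matrix,
`(m + s + θ) q(m+s+1, m+1) = (s - 1 + θ) q(m+s, m+1) + (m - α) q(m+s, m)` and
`(s + θ) q(s+1, 1) = (s - 1 + θ) q(s, 1) + α`. Both are Pascal's rule once
`q(m+s+1, m+1)` is written as `(α C(m+s, m+1) + θ C(m+s, m)) [1-α]_m / [s+θ]_{m+1}`.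
-/

/-- Rising factorial `[x]_j = x (x+1) ⋯ (x+j-1)`, with `[x]_0 = 1`. -/
noncomputable def risingFactorial (x : ℝ) : ℕ → ℝ
  | 0 => 1
  | n + 1 => risingFactorial x n * (x + n)

/-- The decrement matrix
`q_{α,θ}(n, m) = C(n,m) · ((n−m)α + mθ)/n · [1−α]_{m−1} / [n−m+θ]_m` for `1 ≤ m ≤ n`,
and `q_{α,θ}(n, m) = 0` otherwise. -/
noncomputable def decrementMatrix (α θ : ℝ) (n m : ℕ) : ℝ :=
  if 1 ≤ m ∧ m ≤ n then
    (n.choose m : ℝ) * ((((n : ℝ) - m) * α + m * θ) / n) *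
      risingFactorial (1 - α) (m - 1) / risingFactorial ((n : ℝ) - m + θ) m
  else 0

/-- The law of the composition `C_n` of table sizes in the ordered Chinese Restaurant
Process with parameters `(α, θ)`: `C_0` is the empty composition; given `C_n`, the next
composition `C_{n+1}` is obtained by increasing part `j` by one with probability
`(n_j − α)/(n + θ)`, inserting a new part `1` immediately to the left of part `j` with
probability `α/(n + θ)`, and appending a new part `1` at the right end with probability
`θ/(n + θ)`.  (In particular `C_1 = (1)` almost surely.)  The recursion below computes
the resulting probability mass function by enumerating, for a composition `c` of `n+1`,
the part `j` of `c` affected by the last step. -/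
noncomputable def ocrpCompLaw (α θ : ℝ) : ℕ → List ℕ → ℝ
  | 0, c => if c = [] then 1 else 0
  | n + 1, c =>
      ∑ j ∈ Finset.range c.length,
        ((if 2 ≤ c.getD j 0 then
            ocrpCompLaw α θ n (c.set j (c.getD j 0 - 1)) *
              (((c.getD j 0 : ℝ) - 1 - α) / ((n : ℝ) + θ))
          else 0)
        + (if c.getD j 0 = 1 ∧ j + 1 < c.length then
            ocrpCompLaw α θ n (c.eraseIdx j) * (α / ((n : ℝ) + θ))
          else 0)
        + (if c.getD j 0 = 1 ∧ j + 1 = c.length then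
            ocrpCompLaw α θ n (c.eraseIdx j) * (θ / ((n : ℝ) + θ))
          else 0))

lemma risingFactorial_pos {x : ℝ} (hx : 0 < x) (n : ℕ) : 0 < risingFactorial x n := by
  induction n with
  | zero => exact one_pos
  | succ k ih => exact mul_pos ih (by positivity)

lemma risingFactorial_succ_left (x : ℝ) (n : ℕ) :
    risingFactorial x (n + 1) = x * risingFactorial (x + 1) n := by
  induction n with
  | zero => simp [risingFactorial]
  | succ k ih =>
    rw [risingFactorial, ih, risingFactorial]
    push_cast
    ring

lemma decrementMatrix_eq_zero_of_lt (α θ : ℝ) {n m : ℕ} (h : n < m) :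
    decrementMatrix α θ n m = 0 :=
  if_neg (by omega)

lemma decrementMatrix_add_add_one (α θ : ℝ) (m s : ℕ) :
    decrementMatrix α θ (m + s + 1) (m + 1) =
      (α * (m + s).choose (m + 1) + θ * (m + s).choose m) * risingFactorial (1 - α) m /
        risingFactorial (s + θ) (m + 1) := by
  have h₁ : ((m + s + 1).choose (m + 1) : ℝ) * s = (m + s).choose (m + 1) * (m + s + 1) := by
    have := Nat.choose_mul_succ_eq (m + s) (m + 1)
    rw [show m + s + 1 - (m + 1) = s by omega] at this
    exact_mod_cast this.symm
  have h₂ : ((m + s + 1).choose (m + 1) : ℝ) * (m + 1) = (m + s).choose m * (m + s + 1) := by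
    exact_mod_cast ((Nat.add_one_mul_choose_eq (m + s) m).symm.trans (mul_comm _ _))
  have hcoeff : ((m + s + 1).choose (m + 1) : ℝ) *
      (((m + s + 1 - (m + 1)) * α + (m + 1) * θ) / (m + s + 1))
      = α * (m + s).choose (m + 1) + θ * (m + s).choose m := by
    field_simp
    linear_combination α * h₁ + θ * h₂
  rw [decrementMatrix, if_pos (by omega)]
  push_cast
  rw [hcoeff, show (m : ℝ) + s + 1 - (m + 1) + θ = s + θ by ring]

lemma decrementMatrix_recursion (α : ℝ) {θ : ℝ} (hθ : 0 < θ) {m : ℕ} (hm : 1 ≤ m) (s : ℕ) :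
    (m + s + θ) * decrementMatrix α θ (m + s + 1) (m + 1) =
      (s - 1 + θ) * decrementMatrix α θ (m + s) (m + 1) +
        (m - α) * decrementMatrix α θ (m + s) m := by
  obtain ⟨k, rfl⟩ : ∃ k, m = k + 1 := ⟨m - 1, by omega⟩
  have hR : risingFactorial (1 - α) (k + 1) = risingFactorial (1 - α) k * (k + 1 - α) := by
    rw [risingFactorial]; ring
  have hD : risingFactorial (s + θ) (k + 1 + 1) =
      risingFactorial (s + θ) (k + 1) * (s + θ + k + 1) := by
    rw [risingFactorial]; push_cast; ring
  have hpos : 0 < risingFactorial (s + θ) (k + 1) := risingFactorial_pos (by positivity) _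
  rw [decrementMatrix_add_add_one, add_right_comm k 1 s, decrementMatrix_add_add_one,
    Nat.choose_succ_succ' (k + s) (k + 1), Nat.choose_succ_succ' (k + s) k, hR, hD]
  rcases Nat.eq_zero_or_pos s with rfl | hs
  · simp only [decrementMatrix_eq_zero_of_lt α θ (by omega : k + 0 + 1 < k + 1 + 1), add_zero,
      Nat.choose_self, Nat.choose_succ_self, Nat.choose_eq_zero_of_lt (by omega : k < k + 2)]
    field_simp
    push_cast
    ring
  · obtain ⟨e, rfl⟩ : ∃ e, s = e + 1 := ⟨s - 1, by omega⟩
    have hD' : risingFactorial (e + θ) (k + 1 + 1) =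
        (e + θ) * risingFactorial (↑(e + 1) + θ) (k + 1) := by
      rw [risingFactorial_succ_left, show (e : ℝ) + θ + 1 = ↑(e + 1) + θ by push_cast; ring]
    have he : (e : ℝ) + θ ≠ 0 := by positivity
    rw [show k + (e + 1) + 1 = k + 1 + e + 1 by ring, decrementMatrix_add_add_one, hD', hR,
      show k + 1 + e = k + (e + 1) by ring]
    field_simp
    push_cast
    ring

lemma decrementMatrix_succ_one (α θ : ℝ) (s : ℕ) :
    decrementMatrix α θ (s + 1) 1 = (α * s + θ) / (s + θ) := by
  simpa [risingFactorial] using decrementMatrix_add_add_one α θ 0 s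

lemma decrementMatrix_one_one (α : ℝ) {θ : ℝ} (hθ : θ ≠ 0) : decrementMatrix α θ 1 1 = 1 := by
  simp [decrementMatrix, risingFactorial, hθ]

lemma decrementMatrix_one_recursion (α : ℝ) {θ : ℝ} (hθ : 0 < θ) {s : ℕ} (hs : 1 ≤ s) :
    (s + θ) * decrementMatrix α θ (s + 1) 1 = (s - 1 + θ) * decrementMatrix α θ s 1 + α := by
  obtain ⟨e, rfl⟩ : ∃ e, s = e + 1 := ⟨s - 1, by omega⟩
  rw [decrementMatrix_succ_one, decrementMatrix_succ_one]
  have : (e : ℝ) + θ ≠ 0 := by positivity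
  field_simp
  push_cast
  ring

namespace List
variable {M : Type*} [AddCommMonoid M]

lemma sum_set_add_getD (l : List M) {j : ℕ} (hj : j < l.length) (v : M) :
    (l.set j v).sum + l.getD j 0 = l.sum + v := by
  induction l generalizing j with
  | nil => simp at hj
  | cons a t ih =>
    cases j with
    | zero => simp only [set_cons_zero, getD_cons_zero, sum_cons]; abel
    | succ j =>
      simp only [set_cons_succ, getD_cons_succ, sum_cons, add_assoc,
        ih (Nat.succ_lt_succ_iff.1 hj)]

lemma sum_eraseIdx_add_getD (l : List M) {j : ℕ} (hj : j < l.length) :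
    (l.eraseIdx j).sum + l.getD j 0 = l.sum := by
  induction l generalizing j with
  | nil => simp at hj
  | cons a t ih =>
    cases j with
    | zero => simp only [eraseIdx_cons_zero, getD_cons_zero, sum_cons, add_comm]
    | succ j =>
      simp only [eraseIdx_cons_succ, getD_cons_succ, sum_cons, add_assoc,
        ih (Nat.succ_lt_succ_iff.1 hj)]

end List

section Inflow

variable (α θ : ℝ)

noncomputable def inflowTerm (f : List ℕ → ℝ) (c : List ℕ) (j : ℕ) : ℝ :=
  (if 2 ≤ c.getD j 0 then f (c.set j (c.getD j 0 - 1)) * ((c.getD j 0 : ℝ) - 1 - α) else 0)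
  + (if c.getD j 0 = 1 ∧ j + 1 < c.length then f (c.eraseIdx j) * α else 0)
  + (if c.getD j 0 = 1 ∧ j + 1 = c.length then f (c.eraseIdx j) * θ else 0)

noncomputable def inflow (f : List ℕ → ℝ) (c : List ℕ) : ℝ :=
  ∑ j ∈ Finset.range c.length, inflowTerm α θ f c j

lemma ocrpCompLaw_succ (n : ℕ) (c : List ℕ) :
    ocrpCompLaw α θ (n + 1) c = inflow α θ (ocrpCompLaw α θ n) c / (n + θ) := by
  simp only [ocrpCompLaw, inflow, inflowTerm, Finset.sum_div, add_div, ite_div, zero_div,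
    mul_div_assoc]

@[simp]
lemma inflow_nil (f : List ℕ → ℝ) : inflow α θ f [] = 0 := by
  simp [inflow]

lemma inflow_cons (f : List ℕ → ℝ) (a : ℕ) (t : List ℕ) :
    inflow α θ f (a :: t) =
      inflowTerm α θ f (a :: t) 0 + inflow α θ (fun d => f (a :: d)) t := by
  rw [inflow, List.length_cons, Finset.sum_range_succ', add_comm]
  congr 1
  refine Finset.sum_congr rfl fun j _ => ?_
  simp [inflowTerm]

lemma inflow_const_mul (r : ℝ) (f : List ℕ → ℝ) (c : List ℕ) :
    inflow α θ (fun d => r * f d) c = r * inflow α θ f c := by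
  simp only [inflow, inflowTerm, Finset.mul_sum, mul_add, mul_ite, mul_zero, mul_assoc]

lemma inflow_congr {f g : List ℕ → ℝ} {c : List ℕ} (hc : ∀ x ∈ c, 0 < x)
    (hfg : ∀ d : List ℕ, (∀ x ∈ d, 0 < x) → d.sum + 1 = c.sum → f d = g d) :
    inflow α θ f c = inflow α θ g c := by
  refine Finset.sum_congr rfl fun j hj => ?_
  have hj : j < c.length := Finset.mem_range.1 hj
  have hset : 2 ≤ c.getD j 0 → f (c.set j (c.getD j 0 - 1)) = g (c.set j (c.getD j 0 - 1)) :=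
    fun h => hfg _ (fun x hx => (List.mem_or_eq_of_mem_set hx).elim (hc x) (by omega))
      (by have := c.sum_set_add_getD hj (c.getD j 0 - 1); omega)
  have herase : c.getD j 0 = 1 → f (c.eraseIdx j) = g (c.eraseIdx j) :=
    fun h => hfg _ (fun x hx => hc x (List.mem_of_mem_eraseIdx hx))
      (by have := c.sum_eraseIdx_add_getD hj; omega)
  unfold inflowTerm
  split_ifs <;> simp_all

end Inflow

noncomputable def decrementProd (α θ : ℝ) (c : List ℕ) : ℝ :=
  ∏ j ∈ Finset.range c.length, decrementMatrix α θ ((c.drop j).sum) (c.getD j 0)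

@[simp]
lemma decrementProd_nil (α θ : ℝ) : decrementProd α θ [] = 1 := by
  simp [decrementProd]

lemma decrementProd_cons (α θ : ℝ) (a : ℕ) (t : List ℕ) :
    decrementProd α θ (a :: t) = decrementMatrix α θ (a + t.sum) a * decrementProd α θ t := by
  rw [decrementProd, List.length_cons, Finset.prod_range_succ', mul_comm]
  simp [decrementProd]

lemma inflow_decrementProd (α : ℝ) {θ : ℝ} (hθ : 0 < θ) {c : List ℕ} (hc : ∀ x ∈ c, 0 < x)
    (hne : c ≠ []) :
    inflow α θ (decrementProd α θ) c = (c.sum - 1 + θ) * decrementProd α θ c := by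
  induction c with
  | nil => exact absurd rfl hne
  | cons a t ih =>
    have ha : 1 ≤ a := hc a List.mem_cons_self
    have ht : ∀ x ∈ t, 0 < x := fun x hx => hc x (List.mem_cons_of_mem a hx)
    have hrest : inflow α θ (fun d => decrementProd α θ (a :: d)) t =
        decrementMatrix α θ (a + t.sum - 1) a * ((t.sum - 1 + θ) * decrementProd α θ t) := by
      rw [inflow_congr α θ ht
        (g := fun d => decrementMatrix α θ (a + t.sum - 1) a * decrementProd α θ d)
        (fun d _ hd => by rw [decrementProd_cons, show a + d.sum = a + t.sum - 1 by omega]),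
        inflow_const_mul]
      rcases eq_or_ne t [] with rfl | hne
      · simp [decrementMatrix_eq_zero_of_lt α θ (show a - 1 < a by omega)]
      · rw [ih ht hne]
    rw [inflow_cons, hrest, decrementProd_cons]
    simp only [inflowTerm, List.getD_cons_zero, List.set_cons_zero, List.eraseIdx_cons_zero,
      List.length_cons, List.sum_cons, decrementProd_cons]
    rcases Nat.lt_or_ge 1 a with ha2 | ha1
    · obtain ⟨m, rfl⟩ : ∃ m, a = m + 1 := ⟨a - 1, by omega⟩
      rw [if_pos (by omega), if_neg (by omega), if_neg (by omega), Nat.add_sub_cancel,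
        show m + 1 + t.sum - 1 = m + t.sum by omega, show m + 1 + t.sum = m + t.sum + 1 by omega]
      simp only [Nat.cast_add, Nat.cast_one]
      linear_combination
        -decrementProd α θ t * decrementMatrix_recursion α hθ (m := m) (by omega) t.sum
    obtain rfl : a = 1 := by omega
    rcases eq_or_ne t [] with rfl | htne
    · simp [decrementMatrix_one_one α hθ.ne', decrementMatrix_eq_zero_of_lt α θ zero_lt_one]
    have hs : 1 ≤ t.sum := List.sum_pos t ht htne
    rw [if_neg (by omega), if_pos ⟨rfl, by simpa using List.length_pos_iff.2 htne⟩,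
      if_neg (by simpa using htne), add_comm 1 t.sum, Nat.add_sub_cancel]
    simp only [Nat.cast_add, Nat.cast_one]
    linear_combination -decrementProd α θ t * decrementMatrix_one_recursion α hθ hs

lemma ocrpCompLaw_eq_decrementProd (α : ℝ) {θ : ℝ} (hθ : 0 < θ) (n : ℕ) {c : List ℕ}
    (hc : ∀ x ∈ c, 0 < x) (hsum : c.sum = n) :
    ocrpCompLaw α θ n c = decrementProd α θ c := by
  induction n generalizing c with
  | zero =>
    obtain rfl : c = [] := by
      by_contra hne
      exact (List.sum_pos c hc hne).ne' hsum
    simp [ocrpCompLaw]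
  | succ n ih =>
    have hne : c ≠ [] := by rintro rfl; simp at hsum
    have hnθ : (n : ℝ) + θ ≠ 0 := by positivity
    rw [ocrpCompLaw_succ, inflow_congr α θ hc (fun d hd hds => ih hd (by omega)),
      inflow_decrementProd α hθ hc hne, hsum]
    push_cast
    field_simp
    ring

theorem ocrpCompLaw_eq_prod_decrementMatrix_general (α θ : ℝ) (hθ : 0 < θ) (n : ℕ) (c : List ℕ)
    (hpos : ∀ x ∈ c, 0 < x) (hsum : c.sum = n) :
    ocrpCompLaw α θ n c
        = ∏ j ∈ Finset.range c.length, decrementMatrix α θ ((c.drop j).sum) (c.getD j 0)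
      ∧ ∀ (n₁ : ℕ) (rest : List ℕ), c = n₁ :: rest →
        ocrpCompLaw α θ n c = decrementMatrix α θ n n₁ * ocrpCompLaw α θ (n - n₁) rest := by
  refine ⟨ocrpCompLaw_eq_decrementProd α hθ n hpos hsum, ?_⟩
  rintro n₁ rest rfl
  have hrest : ∀ x ∈ rest, 0 < x := fun x hx => hpos x (List.mem_cons_of_mem n₁ hx)
  rw [List.sum_cons] at hsum
  rw [ocrpCompLaw_eq_decrementProd α hθ n hpos (by simpa using hsum),
    ocrpCompLaw_eq_decrementProd α hθ (n - n₁) hrest (by omega), decrementProd_cons, hsum]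

/-- the product formula
`P(C_n = (n₁,…,n_k)) = ∏_j q_{α,θ}(N_j, n_j)`, with `N_j = n_j + ⋯ + n_k`; in
particular, the chain is regenerative:
`P(C_n = n₁ :: rest) = q_{α,θ}(n, n₁) · P(C_{n−n₁} = rest)`. -/
theorem ocrpCompLaw_eq_prod_decrementMatrix (α θ : ℝ) (hα0 : 0 < α) (hα1 : α < 1)
    (hθ : 0 < θ) (n : ℕ) (hn : 1 ≤ n) (c : List ℕ)
    (hpos : ∀ x ∈ c, 0 < x) (hsum : c.sum = n) :
    ocrpCompLaw α θ n c
        = ∏ j ∈ Finset.range c.length, decrementMatrix α θ ((c.drop j).sum) (c.getD j 0)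
      ∧ ∀ (n₁ : ℕ) (rest : List ℕ), c = n₁ :: rest →
        ocrpCompLaw α θ n c = decrementMatrix α θ n n₁ * ocrpCompLaw α θ (n - n₁) rest :=
  ocrpCompLaw_eq_prod_decrementMatrix_general α θ hθ n c hpos hsum
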